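/- Assume x̄ ≠ 0 and 0 ≤ ε̃ ≤ ‖x̄‖²/(9√2). Fix λ ∈ (1/(9√2), 3/5] and set ρ = (1−λ)‖x̄‖/√3. Then for every x ∈ ℝⁿ at least one of the following holds: (i) 6⟨x,x̄⟩² + 3‖x‖²‖x̄‖² − 3‖x̄‖⁴ − ε̃‖x̄‖² ≤ −(1/100)‖x‖²‖x̄‖² − (1/50)‖x̄‖⁴ (negative-curvature region); (ii) ⟨x, ∇g(x)⟩ ≥ (1/500)‖x‖²‖x̄‖² + (1/100)‖x‖⁴ (large radial gradient); (iii) ‖x‖ ≥ (11/20)‖x̄‖ and there exists s ∈ {−1, 1} with ‖x − s·x̄‖ = min(‖x − x̄‖, ‖x + x̄‖) > 0 and ⟨x − s·x̄, ∇g(x)⟩ ≥ (1/250)·‖x‖·‖x̄‖²·‖x − s·x̄‖ (large gradient in the direction away from the nearest true signal); (iv) min(‖x − x̄‖, ‖x + x̄‖) ≤ ρ (region of strong convexity around the true signals). -/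

import Mathlib

open scoped RealInnerProductSpace BigOperators

/-- The expectation `g` of the noisy phase-retrieval objective (up to an additive constant). -/
noncomputable def gObj (n : ℕ) (xbar : EuclideanSpace ℝ (Fin n)) (εt : ℝ)
    (x : EuclideanSpace ℝ (Fin n)) : ℝ :=
  (3 / 4) * (‖x‖ ^ 4 + ‖xbar‖ ^ 4) - (1 / 2) * ‖xbar‖ ^ 2 * ‖x‖ ^ 2 - ⟪xbar, x⟫ ^ 2
    - (εt / 2) * (‖x‖ ^ 2 - ‖xbar‖ ^ 2)

/-- The gradient of `g`. -/
noncomputable def gGrad (n : ℕ) (xbar : EuclideanSpace ℝ (Fin n)) (εt : ℝ)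
    (x : EuclideanSpace ℝ (Fin n)) : EuclideanSpace ℝ (Fin n) :=
  (3 * ‖x‖ ^ 2) • x - (2 * ⟪xbar, x⟫) • xbar - (‖xbar‖ ^ 2 + εt) • x

/-!
If `x` lies neither in region (i) nor in region (iv), it lies in region (iii). Let `s = ±1` be
the sign of `⟪x, x̄⟫`, so that `x - s • x̄` is the shorter of `x ∓ x̄`, and put `a = ‖x̄‖`,
`r = ‖x‖`, `τ = |⟪x, x̄⟫|`, `d = ‖x - s • x̄‖`. Then `d² = r² + a² - 2τ`, and
`⟪x - s • x̄, ∇g(x)⟫` is a polynomial in `a, r, τ, ε̃`. Failure of (iv) gives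
`d² > (2/5)² a² / 3 = (4/75) a²`, failure of (i) gives `r ≥ (11/20) a`, and together with
`0 ≤ τ ≤ r a` and `ε̃ ≤ a² / (9√2) ≤ (2/25) a²` these force the polynomial to be at least
`(1/55) a r d²`, which is at least `(1/250) r a² d` because `d ≥ (11/50) a`.
-/

lemma div_nine_mul_sqrt_two_le {c : ℝ} (hc : 0 ≤ c) : c / (9 * √2) ≤ 2 / 25 * c := by
  have hsqrt : (25 / 18 : ℝ) ≤ √2 := Real.le_sqrt_of_sq_le (by norm_num)
  rw [div_le_iff₀ (by positivity)]
  nlinarith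

lemma sq_lt_sq_of_div_sqrt_three_lt {a lam d : ℝ} (ha : 0 ≤ a) (hlam : lam ≤ 3 / 5)
    (hd : (1 - lam) * a / √3 < d) : 4 / 75 * a ^ 2 < d ^ 2 := by
  have hρ0 : 0 ≤ (1 - lam) * a / √3 := by
    have : 0 ≤ 1 - lam := by linarith
    positivity
  have hρ2 : ((1 - lam) * a / √3) ^ 2 = (1 - lam) ^ 2 * a ^ 2 / 3 := by
    rw [div_pow, mul_pow, Real.sq_sqrt (by norm_num)]
  have hlam_sq : 4 / 25 ≤ (1 - lam) ^ 2 := by nlinarith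
  calc 4 / 75 * a ^ 2 ≤ ((1 - lam) * a / √3) ^ 2 := by rw [hρ2]; nlinarith [sq_nonneg a]
    _ < d ^ 2 := by gcongr

section NearestSign

variable {E : Type*} [NormedAddCommGroup E] [InnerProductSpace ℝ E]

lemma exists_sign_norm_sub_smul_eq_min (x y : E) :
    ∃ s : ℝ, (s = 1 ∨ s = -1) ∧ s * ⟪x, y⟫ = |⟪x, y⟫| ∧
      ‖x - s • y‖ = min ‖x - y‖ ‖x + y‖ := by
  have hsq : ‖x + y‖ ^ 2 - ‖x - y‖ ^ 2 = 4 * ⟪x, y⟫ := by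
    rw [norm_add_sq_real, norm_sub_sq_real]; ring
  rcases le_or_gt 0 ⟪x, y⟫ with h | h
  · refine ⟨1, Or.inl rfl, by rw [one_mul, abs_of_nonneg h], ?_⟩
    rw [one_smul, eq_comm, min_eq_left_iff]
    exact pow_le_pow_iff_left₀ (norm_nonneg _) (norm_nonneg _) two_ne_zero |>.mp (by linarith)
  · refine ⟨-1, Or.inr rfl, by rw [abs_of_neg h]; ring, ?_⟩
    rw [neg_smul, one_smul, sub_neg_eq_add, eq_comm, min_eq_right_iff]
    exact pow_le_pow_iff_left₀ (norm_nonneg _) (norm_nonneg _) two_ne_zero |>.mp (by linarith)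

lemma norm_sub_smul_sq_of_mul_inner_eq_abs {x y : E} {s : ℝ} (hs : s = 1 ∨ s = -1)
    (hst : s * ⟪x, y⟫ = |⟪x, y⟫|) :
    ‖x - s • y‖ ^ 2 = ‖x‖ ^ 2 + ‖y‖ ^ 2 - 2 * |⟪x, y⟫| := by
  have habs : |s| = 1 := by rcases hs with rfl | rfl <;> simp
  rw [norm_sub_sq_real, inner_smul_right, norm_smul, Real.norm_eq_abs, habs, ← hst]
  ring

end NearestSign

lemma inner_gGrad (n : ℕ) (xbar : EuclideanSpace ℝ (Fin n)) (εt : ℝ)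
    (x y : EuclideanSpace ℝ (Fin n)) :
    ⟪y, gGrad n xbar εt x⟫ =
      (3 * ‖x‖ ^ 2 - ‖xbar‖ ^ 2 - εt) * ⟪y, x⟫ - 2 * ⟪xbar, x⟫ * ⟪y, xbar⟫ := by
  simp only [gGrad, inner_sub_right, inner_smul_right]
  ring

lemma inner_sub_smul_gGrad_of_mul_inner_eq_abs {n : ℕ} {xbar x : EuclideanSpace ℝ (Fin n)}
    {s : ℝ} (εt : ℝ) (hst : s * ⟪x, xbar⟫ = |⟪x, xbar⟫|) :
    ⟪x - s • xbar, gGrad n xbar εt x⟫ = 3 * ‖x‖ ^ 4 - 2 * |⟪x, xbar⟫| ^ 2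
      - (‖xbar‖ ^ 2 + εt) * ‖x‖ ^ 2 - |⟪x, xbar⟫| * (3 * ‖x‖ ^ 2 - 3 * ‖xbar‖ ^ 2 - εt) := by
  rw [inner_gGrad, inner_sub_left, inner_sub_left, real_inner_smul_left, real_inner_smul_left,
    real_inner_self_eq_norm_sq, real_inner_self_eq_norm_sq, real_inner_comm x xbar, sq_abs, ← hst]
  ring

section NotNegativeCurvature

variable {a r τ e : ℝ} (ha : 0 < a) (hr : 0 ≤ r) (hτ0 : 0 ≤ τ) (hτ : τ ≤ r * a) (he0 : 0 ≤ e)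
  (hcurv : -(1 / 100) * r ^ 2 * a ^ 2 - (1 / 50) * a ^ 4 <
    6 * τ ^ 2 + 3 * r ^ 2 * a ^ 2 - 3 * a ^ 4 - e * a ^ 2)
include ha hr hτ0 hτ he0 hcurv

lemma radius_ge_of_not_negative_curvature : 11 / 20 * a ≤ r := by
  nlinarith [mul_pos ha ha, mul_nonneg (mul_nonneg ha.le ha.le) he0,
    mul_le_mul hτ hτ hτ0 (mul_nonneg hr ha.le),
    mul_nonneg (mul_nonneg ha.le ha.le) (show 0 ≤ 11 / 20 * a + r by linarith)]

lemma directional_gradient_ge_of_not_negative_curvature (he : e ≤ 2 / 25 * a ^ 2)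
    (hdist : 4 / 75 * a ^ 2 < r ^ 2 + a ^ 2 - 2 * τ) :
    1 / 55 * a * r * (r ^ 2 + a ^ 2 - 2 * τ) ≤
      3 * r ^ 4 - 2 * τ ^ 2 - (a ^ 2 + e) * r ^ 2 - τ * (3 * r ^ 2 - 3 * a ^ 2 - e) := by
  have hra : 0 ≤ r * a := mul_nonneg hr ha.le
  have hd : 0 ≤ r ^ 2 + a ^ 2 - 2 * τ := by nlinarith
  nlinarith [mul_pos ha ha, sq_nonneg (r ^ 2 - τ), sq_nonneg (r ^ 2 - a ^ 2),
    sq_nonneg (a ^ 2 - τ), mul_nonneg hτ0 (sub_nonneg.2 hτ),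
    mul_nonneg (sub_nonneg.2 hτ) (sub_nonneg.2 hτ),
    mul_nonneg (mul_nonneg ha.le ha.le) (sub_nonneg.2 he), mul_nonneg he0 (sub_nonneg.2 he),
    mul_pos (mul_pos ha ha) (sub_pos.2 hdist),
    mul_pos (mul_pos ha ha) (sub_pos.2 hcurv),
    mul_nonneg hτ0 hd, mul_nonneg hra hd, sq_nonneg (r - a), sq_nonneg (r * a - τ),
    mul_nonneg (mul_nonneg hr hr) (sq_nonneg (r - a)),
    mul_nonneg (mul_nonneg ha.le ha.le) (sq_nonneg (r - a)), mul_nonneg hra (sq_nonneg (r - a))]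

lemma directional_gradient_ge_of_far {d : ℝ} (he : e ≤ 2 / 25 * a ^ 2) (hd0 : 0 ≤ d)
    (hd : d ^ 2 = r ^ 2 + a ^ 2 - 2 * τ) (hdist : 4 / 75 * a ^ 2 < d ^ 2) :
    1 / 250 * r * a ^ 2 * d ≤
      3 * r ^ 4 - 2 * τ ^ 2 - (a ^ 2 + e) * r ^ 2 - τ * (3 * r ^ 2 - 3 * a ^ 2 - e) := by
  have hd' : 11 / 50 * a ≤ d := by nlinarith
  calc 1 / 250 * r * a ^ 2 * d ≤ 1 / 55 * a * r * d ^ 2 := by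
        have := mul_le_mul_of_nonneg_left hd' (by positivity : 0 ≤ a * r * d)
        linarith
    _ ≤ _ := hd ▸ directional_gradient_ge_of_not_negative_curvature ha hr hτ0 hτ he0 hcurv he
      (hd ▸ hdist)

end NotNegativeCurvature

theorem stmt19_general (n : ℕ) (xbar : EuclideanSpace ℝ (Fin n)) (hxbar : xbar ≠ 0)
    (εt : ℝ) (hεt0 : 0 ≤ εt) (hεt1 : εt ≤ ‖xbar‖ ^ 2 / (9 * Real.sqrt 2))
    (lam : ℝ) (hlam2 : lam ≤ 3 / 5)
    (ρ : ℝ) (hρ : ρ = (1 - lam) * ‖xbar‖ / Real.sqrt 3) :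
    ∀ x : EuclideanSpace ℝ (Fin n),
      (6 * ⟪x, xbar⟫ ^ 2 + 3 * ‖x‖ ^ 2 * ‖xbar‖ ^ 2 - 3 * ‖xbar‖ ^ 4 - εt * ‖xbar‖ ^ 2 ≤
        -(1 / 100) * ‖x‖ ^ 2 * ‖xbar‖ ^ 2 - (1 / 50) * ‖xbar‖ ^ 4) ∨
      (⟪x, gGrad n xbar εt x⟫ ≥ (1 / 500) * ‖x‖ ^ 2 * ‖xbar‖ ^ 2 + (1 / 100) * ‖x‖ ^ 4) ∨
      (‖x‖ ≥ (11 / 20) * ‖xbar‖ ∧ ∃ s : ℝ, (s = 1 ∨ s = -1) ∧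
        ‖x - s • xbar‖ = min ‖x - xbar‖ ‖x + xbar‖ ∧ 0 < ‖x - s • xbar‖ ∧
        ⟪x - s • xbar, gGrad n xbar εt x⟫ ≥
          (1 / 250) * ‖x‖ * ‖xbar‖ ^ 2 * ‖x - s • xbar‖) ∨
      (min ‖x - xbar‖ ‖x + xbar‖ ≤ ρ) := by
  intro x
  obtain hcurv | hcurv := le_or_gt (6 * ⟪x, xbar⟫ ^ 2 + 3 * ‖x‖ ^ 2 * ‖xbar‖ ^ 2 - 3 * ‖xbar‖ ^ 4
    - εt * ‖xbar‖ ^ 2) (-(1 / 100) * ‖x‖ ^ 2 * ‖xbar‖ ^ 2 - (1 / 50) * ‖xbar‖ ^ 4)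
  · exact Or.inl hcurv
  obtain hnear | hfar := le_or_gt (min ‖x - xbar‖ ‖x + xbar‖) ρ
  · exact Or.inr <| Or.inr <| Or.inr hnear
  refine Or.inr <| Or.inr <| Or.inl ?_
  obtain ⟨s, hs, hst, hmin⟩ := exists_sign_norm_sub_smul_eq_min x xbar
  have ha : 0 < ‖xbar‖ := norm_pos_iff.mpr hxbar
  have hτ : |⟪x, xbar⟫| ≤ ‖x‖ * ‖xbar‖ := abs_real_inner_le_norm x xbar
  have hcurvτ := sq_abs ⟪x, xbar⟫ ▸ hcurv
  have hdist : 4 / 75 * ‖xbar‖ ^ 2 < ‖x - s • xbar‖ ^ 2 :=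
    sq_lt_sq_of_div_sqrt_three_lt ha.le hlam2 (hρ ▸ hmin ▸ hfar)
  refine ⟨radius_ge_of_not_negative_curvature ha (norm_nonneg x) (abs_nonneg _) hτ hεt0 hcurvτ,
    s, hs, hmin, by nlinarith [norm_nonneg (x - s • xbar)], ?_⟩
  rw [inner_sub_smul_gGrad_of_mul_inner_eq_abs εt hst, ge_iff_le]
  exact directional_gradient_ge_of_far ha (norm_nonneg x) (abs_nonneg _) hτ hεt0 hcurvτ
    (hεt1.trans (div_nine_mul_sqrt_two_le (sq_nonneg _))) (norm_nonneg _)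
    (norm_sub_smul_sq_of_mul_inner_eq_abs hs hst) hdist

/-- covering of `ℝⁿ` by the negative-curvature region, the
large-gradient regions and the strong-convexity region, for the expected
objective `g`. -/
theorem stmt19 (n : ℕ) (xbar : EuclideanSpace ℝ (Fin n)) (hxbar : xbar ≠ 0)
    (εt : ℝ) (hεt0 : 0 ≤ εt) (hεt1 : εt ≤ ‖xbar‖ ^ 2 / (9 * Real.sqrt 2))
    (lam : ℝ) (hlam1 : 1 / (9 * Real.sqrt 2) < lam) (hlam2 : lam ≤ 3 / 5)
    (ρ : ℝ) (hρ : ρ = (1 - lam) * ‖xbar‖ / Real.sqrt 3) :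
    ∀ x : EuclideanSpace ℝ (Fin n),
      (6 * ⟪x, xbar⟫ ^ 2 + 3 * ‖x‖ ^ 2 * ‖xbar‖ ^ 2 - 3 * ‖xbar‖ ^ 4 - εt * ‖xbar‖ ^ 2 ≤
        -(1 / 100) * ‖x‖ ^ 2 * ‖xbar‖ ^ 2 - (1 / 50) * ‖xbar‖ ^ 4) ∨
      (⟪x, gGrad n xbar εt x⟫ ≥ (1 / 500) * ‖x‖ ^ 2 * ‖xbar‖ ^ 2 + (1 / 100) * ‖x‖ ^ 4) ∨
      (‖x‖ ≥ (11 / 20) * ‖xbar‖ ∧ ∃ s : ℝ, (s = 1 ∨ s = -1) ∧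
        ‖x - s • xbar‖ = min ‖x - xbar‖ ‖x + xbar‖ ∧ 0 < ‖x - s • xbar‖ ∧
        ⟪x - s • xbar, gGrad n xbar εt x⟫ ≥
          (1 / 250) * ‖x‖ * ‖xbar‖ ^ 2 * ‖x - s • xbar‖) ∨
      (min ‖x - xbar‖ ‖x + xbar‖ ≤ ρ) :=
  stmt19_general n xbar hxbar εt hεt0 hεt1 lam hlam2 ρ hρ
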